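/- (Complementary formula, Theorem 4.) For every integer h, every integer m ≥ 0 and every real number x, E_{m,1/q}^{(h,1)}(1−x) = (−1)^m q^{m+h−1} E_{m,q}^{(h,1)}(x), where E_{m,1/q}^{(h,1)} denotes the same polynomial with q replaced by 1/q (which is again a positive real ≠ 1). -/

import Mathlib

open Finset

/-- The q-number `[x]_q = (1 - q^x)/(1 - q)`, with `q^x = exp (x * log q)` (rpow). -/
noncomputable def qNum (q x : ℝ) : ℝ := (1 - q ^ x) / (1 - q)

/-- `[l]_{-q} = (1 - (-q)^l)/(1 + q)` for a natural number `l`. -/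
noncomputable def qNumNeg (q : ℝ) (l : ℕ) : ℝ := (1 - (-q) ^ l) / (1 + q)

/-- The higher-order q-Euler polynomial
`E_{m,q}^{(h,k)}(x) = ((1+q)^k/(1-q)^m) * Σ_{j=0}^m C(m,j) (-1)^j q^{jx} / Π_{i=0}^{k-1} (1 + q^{h+j-i})`. -/
noncomputable def qE (q : ℝ) (h : ℤ) (k m : ℕ) (x : ℝ) : ℝ :=
  ((1 + q) ^ k / (1 - q) ^ m) *
    ∑ j ∈ Finset.range (m + 1),
      (m.choose j : ℝ) * (-1) ^ j * q ^ ((j : ℝ) * x) /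
        ∏ i ∈ Finset.range k, (1 + q ^ ((h : ℝ) + (j : ℝ) - (i : ℝ)))

/- Replacing `q` by `1/q` and `x` by `1 - x` multiplies the `j`-th summand by `q^h`: multiply
numerator and denominator of `q^{-j(1-x)} / (1 + q^{-(h+j)})` by `q^{h+j}`. The prefactor
`(1 + 1/q)/(1 - 1/q)^m` equals `(-1)^m q^{m-1} (1 + q)/(1 - q)^m`. -/

lemma qE_one (q : ℝ) (h : ℤ) (m : ℕ) (x : ℝ) :
    qE q h 1 m x = (1 + q) / (1 - q) ^ m *
      ∑ j ∈ range (m + 1), (m.choose j : ℝ) * (-1) ^ j * q ^ ((j : ℝ) * x) /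
        (1 + q ^ ((h : ℝ) + j)) := by
  simp only [qE, pow_one, range_one, prod_singleton, CharP.cast_eq_zero, sub_zero]

lemma inv_rpow_mul_one_sub_div {q : ℝ} (hq : 0 < q) (a t x : ℝ) :
    q⁻¹ ^ (t * (1 - x)) / (1 + q⁻¹ ^ (a + t)) = q ^ a * (q ^ (t * x) / (1 + q ^ (a + t))) := by
  have key : q ^ (-(t * (1 - x))) * q ^ (a + t) = q ^ a * q ^ (t * x) := by
    rw [← Real.rpow_add hq, ← Real.rpow_add hq]
    ring_nf
  rw [Real.inv_rpow hq.le, Real.inv_rpow hq.le, ← Real.rpow_neg hq.le]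
  field_simp
  rw [key]
  ring

lemma one_add_inv_div_one_sub_inv_pow {q : ℝ} (hq : q ≠ 0) (m : ℕ) :
    (1 + q⁻¹) / (1 - q⁻¹) ^ m = (-1) ^ m * q ^ ((m : ℤ) - 1) * ((1 + q) / (1 - q) ^ m) := by
  have h1 : 1 + q⁻¹ = (1 + q) * q⁻¹ := by field_simp; ring
  have h2 : 1 - q⁻¹ = -(1 - q) * q⁻¹ := by field_simp; ring
  rw [h1, h2, zpow_sub_one₀ hq, zpow_natCast, mul_pow, neg_pow, inv_pow]
  field_simp
  rw [← pow_mul, mul_comm m 2, pow_mul, neg_one_sq, one_pow, mul_one]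

theorem stmt_7 (q : ℝ) (hq : 0 < q) (h : ℤ) (m : ℕ) (x : ℝ) :
    qE (1 / q) h 1 m (1 - x) = (-1) ^ m * q ^ ((m : ℤ) + h - 1) * qE q h 1 m x := by
  have hsum : ∑ j ∈ range (m + 1), (m.choose j : ℝ) * (-1) ^ j * q⁻¹ ^ ((j : ℝ) * (1 - x)) /
        (1 + q⁻¹ ^ ((h : ℝ) + j)) = q ^ h * ∑ j ∈ range (m + 1), (m.choose j : ℝ) * (-1) ^ j *
          q ^ ((j : ℝ) * x) / (1 + q ^ ((h : ℝ) + j)) := by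
    rw [mul_sum]
    refine sum_congr rfl fun j _ => ?_
    rw [mul_div_assoc, inv_rpow_mul_one_sub_div hq, Real.rpow_intCast]
    ring
  rw [qE_one, qE_one, one_div, hsum, one_add_inv_div_one_sub_inv_pow hq.ne', add_sub_right_comm,
    zpow_add₀ hq.ne']
  ring
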